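/- Let G be a finite simple graph with edge set E(G). Then the harmonic index of the total graph of G satisfies H(T(G)) = (1/2)·H(G) + ∑ 2/(deg(u) + 2·deg(v) + deg(w)) + 8·∑_{uv ∈ E(G)} (deg(u) + deg(v)) / (3·(deg(u) + deg(v))² + 4·deg(u)·deg(v)), where the middle sum ranges over all unordered pairs of distinct edges uv, vw of G sharing a common vertex v (i.e., with u ≠ w). -/

import Mathlib

open scoped Classical

/-- The total graph `T(G)` of a simple graph `G`: its vertex set is `V(G) ∪ E(G)`,
and two vertices of `T(G)` are adjacent iff the corresponding elements of `G`
are adjacent vertices, adjacent (distinct, sharing an endpoint) edges, or an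
incident vertex–edge pair. -/
def SimpleGraph.totalGraph {V : Type*} (G : SimpleGraph V) :
    SimpleGraph (V ⊕ G.edgeSet) where
  Adj x y :=
    match x, y with
    | Sum.inl u, Sum.inl v => G.Adj u v
    | Sum.inl u, Sum.inr e => u ∈ (e : Sym2 V)
    | Sum.inr e, Sum.inl u => u ∈ (e : Sym2 V)
    | Sum.inr e, Sum.inr f => e ≠ f ∧ ∃ v, v ∈ (e : Sym2 V) ∧ v ∈ (f : Sym2 V)
  symm := by
    constructor
    rintro (u | e) (v | f) h
    · exact h.symm
    · exact h
    · exact h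
    · exact ⟨h.1.symm, h.2.imp fun v hv => ⟨hv.2, hv.1⟩⟩
  loopless := by
    constructor
    rintro (u | e) h
    · exact G.loopless.irrefl u h
    · exact h.1 rfl

/-- The harmonic index `H(G) = ∑_{uv ∈ E(G)} 2 / (deg u + deg v)`. -/
noncomputable def SimpleGraph.harmonicIndex {V : Type*} [Fintype V] (G : SimpleGraph V) : ℝ :=
  ∑ e ∈ G.edgeFinset,
    Sym2.lift ⟨fun u v => 2 / ((G.degree u : ℝ) + (G.degree v : ℝ)),
      fun u v => by simp [add_comm]⟩ e

/-!
Summing `2 / (d x + d y)` over ordered pairs of adjacent vertices of `T(G)` gives `2 H(T(G))`.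
In `T(G)` a vertex `u` has degree `2 d(u)` and an edge `ab` has degree `d(a) + d(b)`, so the
pairs fall into three kinds. Pairs of adjacent vertices contribute `H(G)`. An incidence
`a ∈ ab`, counted in both orders, contributes `2 / (3 d(a) + d(b))` twice, and summing over
both ends of each edge uses `2/(3a+b) + 2/(a+3b) = 8(a+b) / (3(a+b)² + 4ab)`. Two distinct
edges meet in at most one vertex `v`, so adjacent edges `vu`, `vw` are counted once for each
ordered pair `(u, w)` of distinct neighbours of `v`, with degree sum `d(u) + 2 d(v) + d(w)`.
-/

open Finset

theorem two_div_add_two_div_eq {a b : ℝ} (ha : 0 ≤ a) (hb : 0 ≤ b) :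
    2 / (2 * a + (a + b)) + 2 / (2 * b + (b + a)) =
      8 * ((a + b) / (3 * (a + b) ^ 2 + 4 * a * b)) := by
  rcases (add_nonneg ha hb).eq_or_lt with hab | hab
  · obtain ⟨rfl, rfl⟩ : a = 0 ∧ b = 0 := ⟨by linarith, by linarith⟩
    simp
  · have h₁ : 2 * a + (a + b) ≠ 0 := by linarith
    have h₂ : 2 * b + (b + a) ≠ 0 := by linarith
    have h₃ : 3 * (a + b) ^ 2 + 4 * a * b ≠ 0 := by nlinarith [mul_nonneg ha hb]
    field_simp
    ring

theorem Sym2.sum_ite_mem_mk {V M : Type*} [Fintype V] [AddCommMonoid M] {a b : V} (hab : a ≠ b)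
    (g : V → M) : ∑ v, (if v ∈ s(a, b) then g v else 0) = g a + g b := by
  have : ∀ v, v ∈ s(a, b) ↔ v ∈ ({a, b} : Finset V) := by simp
  simp_rw [this, Fintype.sum_ite_mem, sum_pair hab]

namespace SimpleGraph

variable {V : Type*}

section

variable [Fintype V] (G : SimpleGraph V)

theorem sum_sum_neighborFinset_eq_sum_edgeFinset {M : Type*} [AddCommMonoid M]
    (f : V → V → M) :
    ∑ v, ∑ w ∈ G.neighborFinset v, f v w =
      ∑ e ∈ G.edgeFinset, Sym2.lift ⟨fun a b => f a b + f b a, fun _ _ => add_comm _ _⟩ e := by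
  have hfiber : ∀ e ∈ G.edgeFinset,
      ∑ p ∈ ({p | G.Adj p.1 p.2} : Finset (V × V)) with s(p.1, p.2) = e, f p.1 p.2 =
        Sym2.lift ⟨fun a b => f a b + f b a, fun _ _ => add_comm _ _⟩ e := by
    intro e he
    induction e using Sym2.ind with
    | _ a b =>
    have hab : G.Adj a b := by simpa using he
    have hpair : ({p ∈ ({p | G.Adj p.1 p.2} : Finset (V × V)) | s(p.1, p.2) = s(a, b)}) =
        {(a, b), (b, a)} := by
      ext ⟨x, y⟩
      simp only [mem_filter, mem_univ, true_and, Sym2.eq_iff, mem_insert, mem_singleton,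
        Prod.mk.injEq]
      constructor
      · exact fun h => h.2
      · rintro (⟨rfl, rfl⟩ | ⟨rfl, rfl⟩)
        exacts [⟨hab, .inl ⟨rfl, rfl⟩⟩, ⟨hab.symm, .inr ⟨rfl, rfl⟩⟩]
    rw [hpair, sum_pair (by simp [hab.ne])]
    rfl
  rw [← sum_congr rfl hfiber, sum_fiberwise_of_maps_to (g := fun p : V × V => s(p.1, p.2))
    (by simp), sum_filter, ← univ_product_univ, sum_product]
  simp_rw [neighborFinset_eq_filter, sum_filter]

theorem two_mul_harmonicIndex :
    2 * G.harmonicIndex =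
      ∑ v, ∑ w, if G.Adj v w then 2 / ((G.degree v : ℝ) + G.degree w) else 0 := by
  simp_rw [← sum_filter, ← neighborFinset_eq_filter, sum_sum_neighborFinset_eq_sum_edgeFinset,
    harmonicIndex, mul_sum]
  refine sum_congr rfl fun e _ => ?_
  induction e using Sym2.ind with
  | _ a b => simp [add_comm (G.degree b : ℝ), two_mul]

theorem sum_edgeSet_ite_mem {M : Type*} [AddCommMonoid M] (v : V) (h : Sym2 V → M) :
    ∑ e : G.edgeSet, (if v ∈ (e : Sym2 V) then h e else 0) =
      ∑ w ∈ G.neighborFinset v, h s(v, w) := by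
  rw [← sum_filter]
  refine (sum_bij' (fun w hw => ⟨s(v, w), (mem_neighborFinset ..).1 hw⟩)
    (fun e he => Sym2.Mem.other (mem_filter.1 he).2) ?_ ?_ ?_ ?_ ?_).symm
  · simp
  · rintro ⟨e, he⟩ hv
    simpa [mem_neighborFinset, ← mem_edgeSet, Sym2.other_spec] using he
  · exact fun w _ => Sym2.congr_right.1 (Sym2.other_spec _)
  · exact fun e _ => Subtype.ext (Sym2.other_spec _)
  · intros; rfl

theorem sum_edgeSet_ite_adjacent {M : Type*} [AddCommMonoid M] (e : G.edgeSet)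
    (h : Sym2 V → M) :
    ∑ f : G.edgeSet,
        (if e ≠ f ∧ ∃ v, v ∈ (e : Sym2 V) ∧ v ∈ (f : Sym2 V) then h f else 0) =
      ∑ v, if v ∈ (e : Sym2 V) then
        ∑ w ∈ G.neighborFinset v, (if s(v, w) ≠ e then h s(v, w) else 0) else 0 := by
  have hshared : ∀ f : G.edgeSet,
      (if e ≠ f ∧ ∃ v, v ∈ (e : Sym2 V) ∧ v ∈ (f : Sym2 V) then h f else 0) =
        ∑ v, if v ∈ (e : Sym2 V) ∧ v ∈ (f : Sym2 V) ∧ (f : Sym2 V) ≠ e then h f else 0 := by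
    intro f
    by_cases hef : e = f
    · simp [hef]
    · have hfe : (f : Sym2 V) ≠ e := fun h => hef (Subtype.ext h.symm)
      -- two distinct edges share at most one vertex
      rw [Fintype.sum_ite_eq_ite_exists _ fun x y hx hy => by_contra fun hxy =>
        hfe (Sym2.eq_of_ne_mem hxy hx.2.1 hy.2.1 hx.1 hy.1)]
      simp [hef, hfe]
  rw [sum_congr rfl fun f _ => hshared f, sum_comm]
  refine sum_congr rfl fun v _ => ?_
  split_ifs with hv
  · rw [← G.sum_edgeSet_ite_mem v fun z => if z ≠ e then h z else 0]
    refine sum_congr rfl fun f _ => ?_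
    simp only [hv, true_and, ite_and]
  · simp [hv]

theorem sum_neighborFinset_ite_ne_of_adj {a b : V} (hab : G.Adj a b) :
    ∑ w ∈ G.neighborFinset a, (if s(a, w) ≠ s(a, b) then 1 else 0) = G.degree a - 1 := by
  simp_rw [ne_eq, Sym2.congr_right, ← card_filter, filter_ne', ← card_neighborFinset_eq_degree]
  exact card_erase_of_mem ((mem_neighborFinset ..).2 hab)

end

section

variable (G : SimpleGraph V)

@[simp] theorem totalGraph_adj_inl_inl (u v : V) :
    G.totalGraph.Adj (.inl u) (.inl v) ↔ G.Adj u v := Iff.rfl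

@[simp] theorem totalGraph_adj_inl_inr (u : V) (e : G.edgeSet) :
    G.totalGraph.Adj (.inl u) (.inr e) ↔ u ∈ (e : Sym2 V) := Iff.rfl

@[simp] theorem totalGraph_adj_inr_inl (u : V) (e : G.edgeSet) :
    G.totalGraph.Adj (.inr e) (.inl u) ↔ u ∈ (e : Sym2 V) := Iff.rfl

@[simp] theorem totalGraph_adj_inr_inr (e f : G.edgeSet) :
    G.totalGraph.Adj (.inr e) (.inr f) ↔ e ≠ f ∧ ∃ v, v ∈ (e : Sym2 V) ∧ v ∈ (f : Sym2 V) :=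
  Iff.rfl

end

variable [Fintype V] (G : SimpleGraph V)

noncomputable def endpointDegreeSum : Sym2 V → ℕ :=
  Sym2.lift ⟨fun a b => G.degree a + G.degree b, fun _ _ => add_comm _ _⟩

@[simp] theorem endpointDegreeSum_mk (a b : V) :
    G.endpointDegreeSum s(a, b) = G.degree a + G.degree b := rfl

theorem totalGraph_degree_inl (u : V) : G.totalGraph.degree (.inl u) = 2 * G.degree u := by
  calc G.totalGraph.degree (.inl u)
      = ∑ v, (if G.Adj u v then 1 else 0) +
          ∑ e : G.edgeSet, if u ∈ (e : Sym2 V) then 1 else 0 := by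
        rw [← Nat.cast_id (degree _ _), degree_eq_sum_if_adj, Fintype.sum_sum_type]
        simp only [totalGraph_adj_inl_inl, totalGraph_adj_inl_inr]
    _ = G.degree u + ∑ w ∈ G.neighborFinset u, 1 := by
        rw [G.sum_edgeSet_ite_mem u fun _ => 1, ← Nat.cast_id (G.degree u),
          G.degree_eq_sum_if_adj]
    _ = 2 * G.degree u := by rw [← card_eq_sum_ones, card_neighborFinset_eq_degree, two_mul]

theorem totalGraph_degree_inr (e : G.edgeSet) :
    G.totalGraph.degree (.inr e) = G.endpointDegreeSum e := by
  obtain ⟨e, he⟩ := e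
  induction e using Sym2.ind with
  | _ a b =>
  have hab : G.Adj a b := he
  have hba : s(b, a) = s(a, b) := Sym2.eq_swap
  have ha := (G.degree_pos_iff_exists_adj a).2 ⟨b, hab⟩
  have hb := (G.degree_pos_iff_exists_adj b).2 ⟨a, hab.symm⟩
  calc G.totalGraph.degree (.inr ⟨s(a, b), he⟩)
      = ∑ v, (if v ∈ s(a, b) then 1 else 0) + ∑ f : G.edgeSet,
          if (⟨s(a, b), he⟩ : G.edgeSet) ≠ f ∧ ∃ v, v ∈ s(a, b) ∧ v ∈ (f : Sym2 V)
          then 1 else 0 := by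
        rw [← Nat.cast_id (degree _ _), degree_eq_sum_if_adj, Fintype.sum_sum_type]
        simp only [totalGraph_adj_inr_inl, totalGraph_adj_inr_inr]
    _ = 2 + ((G.degree a - 1) + (G.degree b - 1)) := by
        rw [G.sum_edgeSet_ite_adjacent _ fun _ => 1]
        dsimp only
        rw [Sym2.sum_ite_mem_mk hab.ne, Sym2.sum_ite_mem_mk hab.ne,
          G.sum_neighborFinset_ite_ne_of_adj hab]
        simp only [← hba, G.sum_neighborFinset_ite_ne_of_adj hab.symm]
    _ = G.endpointDegreeSum s(a, b) := by
        rw [endpointDegreeSum_mk]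
        omega

theorem sum_sum_ite_mem_edgeSet_two_div :
    ∑ u, ∑ e : G.edgeSet, (if u ∈ (e : Sym2 V) then
        2 / (2 * (G.degree u : ℝ) + G.endpointDegreeSum e) else 0) =
      8 * ∑ e ∈ G.edgeFinset, Sym2.lift ⟨fun a b =>
        ((G.degree a : ℝ) + G.degree b) /
          (3 * ((G.degree a : ℝ) + G.degree b) ^ 2 + 4 * (G.degree a : ℝ) * G.degree b),
        fun _ _ => by ring_nf⟩ e := by
  rw [sum_congr rfl fun u _ => G.sum_edgeSet_ite_mem u fun e =>
      2 / (2 * (G.degree u : ℝ) + G.endpointDegreeSum e),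
    sum_sum_neighborFinset_eq_sum_edgeFinset, mul_sum]
  refine sum_congr rfl fun e _ => ?_
  induction e using Sym2.ind with
  | _ a b => simpa using two_div_add_two_div_eq (G.degree a).cast_nonneg (G.degree b).cast_nonneg

theorem sum_sum_ite_adjacent_edgeSet_two_div :
    ∑ e : G.edgeSet, ∑ f : G.edgeSet,
        (if e ≠ f ∧ ∃ v, v ∈ (e : Sym2 V) ∧ v ∈ (f : Sym2 V) then
          2 / ((G.endpointDegreeSum e : ℝ) + G.endpointDegreeSum f) else 0) =
      ∑ v, ∑ u ∈ G.neighborFinset v, ∑ w ∈ G.neighborFinset v,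
        (if u ≠ w then 2 / ((G.degree u : ℝ) + 2 * (G.degree v : ℝ) + G.degree w) else 0) := by
  rw [sum_congr rfl fun e _ => G.sum_edgeSet_ite_adjacent e fun f =>
      2 / ((G.endpointDegreeSum e : ℝ) + G.endpointDegreeSum f), sum_comm]
  refine sum_congr rfl fun v _ => ?_
  rw [G.sum_edgeSet_ite_mem v fun e => ∑ w ∈ G.neighborFinset v, if s(v, w) ≠ e then
    2 / ((G.endpointDegreeSum e : ℝ) + G.endpointDegreeSum s(v, w)) else 0]
  refine sum_congr rfl fun u _ => sum_congr rfl fun w _ => ?_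
  simp only [ne_eq, Sym2.congr_right, eq_comm (a := w), endpointDegreeSum_mk, Nat.cast_add]
  congr 2
  ring

end SimpleGraph

open SimpleGraph

/-- The middle sum is written as one half of the corresponding sum over ordered pairs `(u, w)`
of distinct neighbours of each vertex `v`. -/
theorem harmonicIndex_totalGraph {V : Type*} [Fintype V] (G : SimpleGraph V) :
    G.totalGraph.harmonicIndex =
      (1 / 2) * G.harmonicIndex
      + (1 / 2) * ∑ v : V, ∑ u ∈ G.neighborFinset v, ∑ w ∈ G.neighborFinset v,
          (if u ≠ w then
            2 / ((G.degree u : ℝ) + 2 * (G.degree v : ℝ) + (G.degree w : ℝ)) else 0)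
      + 8 * ∑ e ∈ G.edgeFinset,
          Sym2.lift ⟨fun u v =>
              ((G.degree u : ℝ) + (G.degree v : ℝ)) /
                (3 * ((G.degree u : ℝ) + (G.degree v : ℝ)) ^ 2
                  + 4 * (G.degree u : ℝ) * (G.degree v : ℝ)),
            fun u v => by ring_nf⟩ e := by
  have hT := G.totalGraph.two_mul_harmonicIndex
  simp only [Fintype.sum_sum_type, totalGraph_adj_inl_inl, totalGraph_adj_inl_inr,
    totalGraph_adj_inr_inl, totalGraph_adj_inr_inr, totalGraph_degree_inl,
    totalGraph_degree_inr, Nat.cast_mul, Nat.cast_ofNat, sum_add_distrib] at hT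
  have hVV : ∑ u, ∑ v, (if G.Adj u v then
      2 / (2 * (G.degree u : ℝ) + 2 * G.degree v) else 0) = G.harmonicIndex := by
    refine mul_left_cancel₀ (two_ne_zero' ℝ) ?_
    rw [two_mul_harmonicIndex, mul_sum]
    refine sum_congr rfl fun u _ => ?_
    rw [mul_sum]
    refine sum_congr rfl fun v _ => ?_
    split_ifs
    · rw [← mul_add, mul_div_assoc', mul_div_mul_left _ _ two_ne_zero]
    · simp
  have hEV : ∑ e : G.edgeSet, ∑ u, (if u ∈ (e : Sym2 V) then
      2 / ((G.endpointDegreeSum e : ℝ) + 2 * G.degree u) else 0) =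
      ∑ u, ∑ e : G.edgeSet, (if u ∈ (e : Sym2 V) then
        2 / (2 * (G.degree u : ℝ) + G.endpointDegreeSum e) else 0) := by
    rw [sum_comm]
    simp only [add_comm]
  rw [hVV, hEV, sum_sum_ite_mem_edgeSet_two_div, sum_sum_ite_adjacent_edgeSet_two_div] at hT
  linarith
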